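/- The target vector is majorized by the intermediate vector of the recursive construction: φ ≺ φ^f, i.e., ∑_{i=1}^k φ_i ≤ ∑_{i=1}^k φ^f_i for every k ∈ {1,…,d}. -/

import Mathlib

open Finset

/-- Tail-sum coherence monotone `C_l(p) = ∑_{i=l}^d p_i`, for a vector with (1-based)
entries `p 1, …, p d`.  Note `Cm d p (d+1) = 0` automatically. -/
noncomputable def Cm (d : ℕ) (p : ℕ → ℝ) (l : ℕ) : ℝ := ∑ i ∈ Finset.Icc l d, p i

/-- `p` is a descending probability vector on the (1-based) index range `{1, …, d}`. -/
structure DescProb (d : ℕ) (p : ℕ → ℝ) : Prop where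
  nonneg : ∀ i, 1 ≤ i → i ≤ d → 0 ≤ p i
  anti : ∀ i j, 1 ≤ i → i ≤ j → j ≤ d → p j ≤ p i
  sum_one : ∑ i ∈ Finset.Icc 1 d, p i = 1

/-- `p ≺ q` : `p` is majorized by `q` (both regarded as descending vectors on `{1, …, d}`). -/
def MajorizedBy (d : ℕ) (p q : ℕ → ℝ) : Prop :=
  (∀ k, 1 ≤ k → k ≤ d → ∑ i ∈ Finset.Icc 1 k, p i ≤ ∑ i ∈ Finset.Icc 1 k, q i) ∧
    ∑ i ∈ Finset.Icc 1 d, p i = ∑ i ∈ Finset.Icc 1 d, q i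

/-- The ratio `(C_l(ψ) - C_prev(ψ)) / (C_l(φ) - C_prev(φ))` appearing in the recursive
construction of the intermediate vector. -/
noncomputable def ratio (d : ℕ) (ψ φ : ℕ → ℝ) (prev l : ℕ) : ℝ :=
  (Cm d ψ l - Cm d ψ prev) / (Cm d φ l - Cm d φ prev)

/-- One step of the recursion: the minimal ratio over `l ∈ {1, …, prev - 1}`. -/
noncomputable def stepQ (d : ℕ) (ψ φ : ℕ → ℝ) (prev : ℕ) : ℝ :=
  sInf {x : ℝ | ∃ l, 1 ≤ l ∧ l ≤ prev - 1 ∧ x = ratio d ψ φ prev l}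

/-- One step of the recursion: the smallest `l ∈ {1, …, prev - 1}` attaining the minimal
ratio. -/
noncomputable def stepL (d : ℕ) (ψ φ : ℕ → ℝ) (prev : ℕ) : ℕ :=
  sInf {l : ℕ | 1 ≤ l ∧ l ≤ prev - 1 ∧ ratio d ψ φ prev l = stepQ d ψ φ prev}

/-- The sequence of indices `l_0 = d + 1 > l_1 > l_2 > ⋯` of the recursive construction. -/
noncomputable def Lseq (d : ℕ) (ψ φ : ℕ → ℝ) : ℕ → ℕ
  | 0 => d + 1
  | j + 1 => stepL d ψ φ (Lseq d ψ φ j)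

/-- The sequence of ratios `q_1 < q_2 < ⋯` of the recursive construction (`Qseq d ψ φ j`
is `q_j` for `j ≥ 1`; the value at `0` is irrelevant). -/
noncomputable def Qseq (d : ℕ) (ψ φ : ℕ → ℝ) : ℕ → ℝ
  | 0 => 1
  | j + 1 => stepQ d ψ φ (Lseq d ψ φ j)

/-- The terminating step `k` of the recursion: the first index `j` with `l_j = 1`. -/
noncomputable def kstop (d : ℕ) (ψ φ : ℕ → ℝ) : ℕ := sInf {j : ℕ | Lseq d ψ φ j = 1}

/-- The intermediate vector `φ^f`, with `φ^f_i = q_j φ_i` for `i ∈ {l_j, …, l_{j-1} - 1}`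
(for `i ∈ {1, …, d}`, the smallest `j` with `l_j ≤ i` is precisely the `j` with
`l_j ≤ i ≤ l_{j-1} - 1`). -/
noncomputable def phif (d : ℕ) (ψ φ : ℕ → ℝ) (i : ℕ) : ℝ :=
  Qseq d ψ φ (sInf {j : ℕ | Lseq d ψ φ j ≤ i}) * φ i

/-!
Write `φ^f_i = r_i φ_i`, where `r_i = q_j` on the block `{l_j, …, l_{j-1} - 1}`. The ratios
increase from block to block (`q_{j+1} ≤ q_{j+2}`: test the minimality of `q_{j+1}` at
`l = l_{j+2}`), so `r` is non-increasing. Each block contributes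
`q_j (C_{l_j}(φ) - C_{l_{j-1}}(φ)) = C_{l_j}(ψ) - C_{l_{j-1}}(ψ)`, hence `φ^f` has the mass of `ψ`
on every tail `{l_j, …, d}`, in particular total mass `1`. Rescaling a nonnegative vector by a
non-increasing factor without changing its total mass can only raise its partial sums.
-/

theorem sum_Icc_le_sum_Icc_mul_of_antitoneOn {g r : ℕ → ℝ} {a k d : ℕ}
    (hg : ∀ i ∈ Icc a d, 0 ≤ g i) (hr : AntitoneOn r (Set.Icc a d))
    (hsum : ∑ i ∈ Icc a d, g i = ∑ i ∈ Icc a d, r i * g i) (hak : a ≤ k) (hkd : k ≤ d) :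
    ∑ i ∈ Icc a k, g i ≤ ∑ i ∈ Icc a k, r i * g i := by
  have hk : k ∈ Set.Icc a d := ⟨hak, hkd⟩
  by_cases hrk : 1 ≤ r k
  · refine sum_le_sum fun i hi => le_mul_of_one_le_left (hg i ?_) ?_
    · exact mem_Icc.2 ⟨(mem_Icc.1 hi).1, (mem_Icc.1 hi).2.trans hkd⟩
    · obtain ⟨hai, hik⟩ := mem_Icc.1 hi
      exact hrk.trans (hr ⟨hai, hik.trans hkd⟩ hk hik)
  · have htail : ∑ i ∈ Ico (k + 1) (d + 1), r i * g i ≤ ∑ i ∈ Ico (k + 1) (d + 1), g i := by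
      refine sum_le_sum fun i hi => mul_le_of_le_one_left (hg i ?_) ?_
      · simp only [mem_Ico, mem_Icc] at hi ⊢; omega
      · obtain ⟨hki, hid⟩ := mem_Ico.1 hi
        exact (hr hk ⟨by omega, by omega⟩ (by omega)).trans (not_le.1 hrk).le
    simp only [← Ico_add_one_right_eq_Icc] at hsum ⊢
    rw [← sum_Ico_consecutive _ (by omega : a ≤ k + 1) (by omega : k + 1 ≤ d + 1),
      ← sum_Ico_consecutive _ (by omega : a ≤ k + 1) (by omega : k + 1 ≤ d + 1)] at hsum
    linarith

section Cm

variable {d : ℕ} {p : ℕ → ℝ} {l m : ℕ}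

theorem Cm_sub_Cm (hlm : l ≤ m) (hm : m ≤ d + 1) :
    Cm d p l - Cm d p m = ∑ i ∈ Ico l m, p i := by
  simp only [Cm, ← Ico_add_one_right_eq_Icc, ← sum_Ico_consecutive p hlm hm]
  ring

theorem Cm_sub_Cm_pos (hp : ∀ i, 1 ≤ i → i ≤ d → 0 < p i) (hl : 1 ≤ l) (hlm : l < m)
    (hm : m ≤ d + 1) : 0 < Cm d p l - Cm d p m := by
  rw [Cm_sub_Cm hlm.le hm]
  exact sum_pos (fun i hi => hp i (by rw [mem_Ico] at hi; omega) (by rw [mem_Ico] at hi; omega))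
    (nonempty_Ico.2 hlm)

end Cm

section Step

variable {d : ℕ} {ψ φ : ℕ → ℝ} {prev l : ℕ}

theorem finite_setOf_ratio (d : ℕ) (ψ φ : ℕ → ℝ) (prev : ℕ) :
    {x : ℝ | ∃ l, 1 ≤ l ∧ l ≤ prev - 1 ∧ x = ratio d ψ φ prev l}.Finite := by
  refine ((Set.finite_Icc 1 (prev - 1)).image (ratio d ψ φ prev)).subset ?_
  rintro _ ⟨l, hl, hlp, rfl⟩
  exact ⟨l, ⟨hl, hlp⟩, rfl⟩

theorem stepQ_le_ratio (hl : 1 ≤ l) (hlp : l ≤ prev - 1) :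
    stepQ d ψ φ prev ≤ ratio d ψ φ prev l :=
  csInf_le (finite_setOf_ratio d ψ φ prev).bddBelow ⟨l, hl, hlp, rfl⟩

theorem exists_ratio_eq_stepQ (hprev : 2 ≤ prev) :
    ∃ l, 1 ≤ l ∧ l ≤ prev - 1 ∧ ratio d ψ φ prev l = stepQ d ψ φ prev := by
  have hne : {x : ℝ | ∃ l, 1 ≤ l ∧ l ≤ prev - 1 ∧ x = ratio d ψ φ prev l}.Nonempty :=
    ⟨_, 1, le_rfl, by omega, rfl⟩
  obtain ⟨l, hl, hlp, h⟩ := hne.csInf_mem (finite_setOf_ratio d ψ φ prev)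
  exact ⟨l, hl, hlp, h.symm⟩

theorem stepL_spec (hprev : 2 ≤ prev) :
    1 ≤ stepL d ψ φ prev ∧ stepL d ψ φ prev ≤ prev - 1 ∧
      ratio d ψ φ prev (stepL d ψ φ prev) = stepQ d ψ φ prev :=
  Nat.sInf_mem (exists_ratio_eq_stepQ hprev)

end Step

section Recursion

variable {d : ℕ} {ψ φ : ℕ → ℝ} {j : ℕ}

theorem Lseq_succ (j : ℕ) : Lseq d ψ φ (j + 1) = stepL d ψ φ (Lseq d ψ φ j) := rfl

theorem Qseq_succ (j : ℕ) : Qseq d ψ φ (j + 1) = stepQ d ψ φ (Lseq d ψ φ j) := rfl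

theorem Lseq_bounds_of_forall_ne_one (h : ∀ j' < j, Lseq d ψ φ j' ≠ 1) :
    1 ≤ Lseq d ψ φ j ∧ Lseq d ψ φ j + j ≤ d + 1 := by
  induction j with
  | zero => simp [Lseq]
  | succ j ih =>
    obtain ⟨hpos, hbound⟩ := ih fun j' hj' => h j' (by omega)
    have hstep := stepL_spec (ψ := ψ) (φ := φ) (d := d)
      (show 2 ≤ Lseq d ψ φ j by have := h j (by omega); omega)
    rw [Lseq_succ]
    omega

theorem exists_Lseq_eq_one : ∃ j, Lseq d ψ φ j = 1 := by
  by_contra! h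
  have := Lseq_bounds_of_forall_ne_one (j := d + 1) fun j' _ => h j'
  omega

theorem Lseq_kstop : Lseq d ψ φ (kstop d ψ φ) = 1 :=
  Nat.sInf_mem exists_Lseq_eq_one

theorem Lseq_ne_one (hj : j < kstop d ψ φ) : Lseq d ψ φ j ≠ 1 :=
  Nat.notMem_of_lt_sInf (s := {j | Lseq d ψ φ j = 1}) hj

theorem one_le_Lseq (hj : j ≤ kstop d ψ φ) : 1 ≤ Lseq d ψ φ j :=
  (Lseq_bounds_of_forall_ne_one fun _ hj' => Lseq_ne_one (hj'.trans_le hj)).1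

theorem two_le_Lseq (hj : j < kstop d ψ φ) : 2 ≤ Lseq d ψ φ j := by
  have := Lseq_ne_one hj
  have := one_le_Lseq hj.le
  omega

theorem Lseq_succ_lt (hj : j < kstop d ψ φ) : Lseq d ψ φ (j + 1) < Lseq d ψ φ j := by
  have := (stepL_spec (d := d) (ψ := ψ) (φ := φ) (two_le_Lseq hj)).2.1
  have := two_le_Lseq hj
  rw [Lseq_succ]
  omega

theorem strictAntiOn_Lseq : StrictAntiOn (Lseq d ψ φ) (Set.Iic (kstop d ψ φ)) :=
  strictAntiOn_of_add_one_lt Set.ordConnected_Iic fun _ _ _ hj => Lseq_succ_lt hj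

theorem Lseq_le (hj : j ≤ kstop d ψ φ) : Lseq d ψ φ j ≤ d + 1 :=
  strictAntiOn_Lseq.antitoneOn (Set.mem_Iic.2 (Nat.zero_le _)) hj (Nat.zero_le j)

end Recursion

section Ratios

variable {d : ℕ} {ψ φ : ℕ → ℝ} {j l : ℕ}

theorem Qseq_succ_mul_le (hφ : ∀ i, 1 ≤ i → i ≤ d → 0 < φ i) (hj : j < kstop d ψ φ)
    (hl : 1 ≤ l) (hlL : l < Lseq d ψ φ j) :
    Qseq d ψ φ (j + 1) * (Cm d φ l - Cm d φ (Lseq d ψ φ j)) ≤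
      Cm d ψ l - Cm d ψ (Lseq d ψ φ j) := by
  have hden := Cm_sub_Cm_pos hφ hl hlL (Lseq_le hj.le)
  calc Qseq d ψ φ (j + 1) * (Cm d φ l - Cm d φ (Lseq d ψ φ j))
      ≤ ratio d ψ φ (Lseq d ψ φ j) l * (Cm d φ l - Cm d φ (Lseq d ψ φ j)) :=
        mul_le_mul_of_nonneg_right (stepQ_le_ratio hl (by omega)) hden.le
    _ = Cm d ψ l - Cm d ψ (Lseq d ψ φ j) := div_mul_cancel₀ _ hden.ne'

theorem Qseq_succ_mul_eq (hφ : ∀ i, 1 ≤ i → i ≤ d → 0 < φ i) (hj : j < kstop d ψ φ) :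
    Qseq d ψ φ (j + 1) * (Cm d φ (Lseq d ψ φ (j + 1)) - Cm d φ (Lseq d ψ φ j)) =
      Cm d ψ (Lseq d ψ φ (j + 1)) - Cm d ψ (Lseq d ψ φ j) := by
  have hden := Cm_sub_Cm_pos hφ (one_le_Lseq hj) (Lseq_succ_lt hj) (Lseq_le hj.le)
  rw [Qseq_succ, ← (stepL_spec (two_le_Lseq hj)).2.2, ← Lseq_succ, ratio,
    div_mul_cancel₀ _ hden.ne']

theorem Qseq_succ_le (hφ : ∀ i, 1 ≤ i → i ≤ d → 0 < φ i) (hj : j + 2 ≤ kstop d ψ φ) :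
    Qseq d ψ φ (j + 1) ≤ Qseq d ψ φ (j + 2) := by
  have hlt := Lseq_succ_lt (ψ := ψ) (φ := φ) (show j + 1 < kstop d ψ φ by omega)
  have hle := Qseq_succ_mul_le hφ (show j < kstop d ψ φ by omega) (one_le_Lseq hj)
    (hlt.trans (Lseq_succ_lt (by omega)))
  have heq := Qseq_succ_mul_eq hφ (show j < kstop d ψ φ by omega)
  have heq' := Qseq_succ_mul_eq hφ (show j + 1 < kstop d ψ φ by omega)
  have hden := Cm_sub_Cm_pos hφ (one_le_Lseq hj) hlt (Lseq_le (by omega))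
  exact le_of_mul_le_mul_right (by linarith) hden

theorem monotoneOn_Qseq (hφ : ∀ i, 1 ≤ i → i ≤ d → 0 < φ i) :
    MonotoneOn (Qseq d ψ φ) (Set.Icc 1 (kstop d ψ φ)) := by
  refine monotoneOn_of_le_add_one Set.ordConnected_Icc fun a _ ha ha' => ?_
  obtain ⟨j, rfl⟩ : ∃ j, a = j + 1 := ⟨a - 1, by have := ha.1; omega⟩
  exact Qseq_succ_le hφ ha'.2

end Ratios

section IntermediateVector

variable {d : ℕ} {ψ φ : ℕ → ℝ} {i j : ℕ}

/-- The index `j` of the block `{l_j, …, l_{j-1} - 1}` containing `i`. -/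
noncomputable def blockIdx (d : ℕ) (ψ φ : ℕ → ℝ) (i : ℕ) : ℕ := sInf {j : ℕ | Lseq d ψ φ j ≤ i}

theorem phif_eq (i : ℕ) : phif d ψ φ i = Qseq d ψ φ (blockIdx d ψ φ i) * φ i := rfl

theorem Lseq_blockIdx_le (hi : 1 ≤ i) : Lseq d ψ φ (blockIdx d ψ φ i) ≤ i :=
  Nat.sInf_mem (s := {j | Lseq d ψ φ j ≤ i}) ⟨kstop d ψ φ, Lseq_kstop.trans_le hi⟩

theorem blockIdx_mem_Icc (hi : 1 ≤ i) (hid : i ≤ d) :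
    blockIdx d ψ φ i ∈ Set.Icc 1 (kstop d ψ φ) := by
  refine ⟨Nat.one_le_iff_ne_zero.2 fun h0 => ?_, Nat.sInf_le (Lseq_kstop.trans_le hi)⟩
  have := Lseq_blockIdx_le (d := d) (ψ := ψ) (φ := φ) hi
  rw [h0, Lseq] at this
  omega

theorem antitoneOn_blockIdx : AntitoneOn (blockIdx d ψ φ) (Set.Ici 1) :=
  fun _ hi _ _ hii' => Nat.sInf_le ((Lseq_blockIdx_le hi).trans hii')

theorem blockIdx_eq (hj : j < kstop d ψ φ) (hi : Lseq d ψ φ (j + 1) ≤ i)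
    (hi' : i < Lseq d ψ φ j) : blockIdx d ψ φ i = j + 1 := by
  refine le_antisymm (Nat.sInf_le hi) (le_csInf ⟨_, hi⟩ fun j' (hj' : Lseq d ψ φ j' ≤ i) => ?_)
  by_contra! h
  have := strictAntiOn_Lseq.antitoneOn (Set.mem_Iic.2 (by omega : j' ≤ kstop d ψ φ))
    (Set.mem_Iic.2 hj.le) (by omega : j' ≤ j)
  omega

theorem antitoneOn_Qseq_blockIdx (hφ : ∀ i, 1 ≤ i → i ≤ d → 0 < φ i) :
    AntitoneOn (fun i => Qseq d ψ φ (blockIdx d ψ φ i)) (Set.Icc 1 d) :=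
  fun _ hi _ hi' hii' => monotoneOn_Qseq hφ (blockIdx_mem_Icc hi'.1 hi'.2)
    (blockIdx_mem_Icc hi.1 hi.2) (antitoneOn_blockIdx hi.1 hi'.1 hii')

theorem Cm_phif_Lseq (hφ : ∀ i, 1 ≤ i → i ≤ d → 0 < φ i) (hj : j ≤ kstop d ψ φ) :
    Cm d (phif d ψ φ) (Lseq d ψ φ j) = Cm d ψ (Lseq d ψ φ j) := by
  induction j with
  | zero => simp [Lseq, Cm]
  | succ j ih =>
    have hj' : j < kstop d ψ φ := by omega
    have hlt := Lseq_succ_lt hj'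
    have hblock : Cm d (phif d ψ φ) (Lseq d ψ φ (j + 1)) - Cm d (phif d ψ φ) (Lseq d ψ φ j) =
        Qseq d ψ φ (j + 1) * (Cm d φ (Lseq d ψ φ (j + 1)) - Cm d φ (Lseq d ψ φ j)) := by
      rw [Cm_sub_Cm hlt.le (Lseq_le hj'.le), Cm_sub_Cm hlt.le (Lseq_le hj'.le), mul_sum]
      refine sum_congr rfl fun i hi => ?_
      rw [phif_eq, blockIdx_eq hj' (mem_Ico.1 hi).1 (mem_Ico.1 hi).2]
    linarith [Qseq_succ_mul_eq hφ hj', ih hj'.le]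

theorem sum_phif (hφ : ∀ i, 1 ≤ i → i ≤ d → 0 < φ i) :
    ∑ i ∈ Icc 1 d, phif d ψ φ i = ∑ i ∈ Icc 1 d, ψ i := by
  have := Cm_phif_Lseq hφ (le_refl (kstop d ψ φ))
  rwa [Lseq_kstop] at this

end IntermediateVector

theorem target_majorized_by_phif_general (d : ℕ) (ψ φ : ℕ → ℝ)
    (hψ : DescProb d ψ) (hφ : DescProb d φ)
    (hφpos : ∀ i, 1 ≤ i → i ≤ d → 0 < φ i) :
    MajorizedBy d φ (phif d ψ φ) := by
  have hsum : ∑ i ∈ Icc 1 d, φ i = ∑ i ∈ Icc 1 d, phif d ψ φ i := by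
    rw [sum_phif hφpos, hφ.sum_one, hψ.sum_one]
  refine ⟨fun k hk hkd => ?_, hsum⟩
  exact sum_Icc_le_sum_Icc_mul_of_antitoneOn
    (fun i hi => hφ.nonneg i (mem_Icc.1 hi).1 (mem_Icc.1 hi).2)
    (antitoneOn_Qseq_blockIdx hφpos) hsum hk hkd

/-- The target vector is majorized by the intermediate vector of the
recursive construction: `φ ≺ φ^f`. -/
theorem target_majorized_by_phif (d : ℕ) (hd : 1 ≤ d) (ψ φ : ℕ → ℝ)
    (hψ : DescProb d ψ) (hφ : DescProb d φ)
    (hψpos : ∀ i, 1 ≤ i → i ≤ d → 0 < ψ i) (hφpos : ∀ i, 1 ≤ i → i ≤ d → 0 < φ i) :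
    MajorizedBy d φ (phif d ψ φ) :=
  target_majorized_by_phif_general d ψ φ hψ hφ hφpos
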